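/- arXiv:2408.04980 — 3 statements merged into one kernel-verified Lean document; each statement's English description precedes it below -/
import Mathlib

section
/- (Courbage; characterization of the Liouville superoperator.) A Hilbert–Schmidt operator A on ℋ belongs to Dom 𝐇 if and only if A·Dom H ⊆ Dom H, the commutator [H,A] defined on Dom H is a bounded operator, and its closure overline[H,A] is Hilbert–Schmidt; in that case 𝐇A = overline[H,A]. -/
open Filter Topology ContinuousLinearMap
open scoped InnerProductSpace

noncomputable section

namespace LiouvilleFormalization

variable {H : Type*} [NormedAddCommGroup H] [InnerProductSpace ℂ H] [CompleteSpace H]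

/-- `A` is Hilbert–Schmidt with respect to the orthonormal basis `e`
(equivalently, with respect to every orthonormal basis). -/
def IsHS (e : HilbertBasis ℕ ℂ H) (A : H →L[ℂ] H) : Prop :=
  Summable fun n => ‖A (e n)‖ ^ 2

/-- The Hilbert–Schmidt norm of `A` computed in the orthonormal basis `e`. -/
def hsNorm (e : HilbertBasis ℕ ℂ H) (A : H →L[ℂ] H) : ℝ :=
  Real.sqrt (∑' n, ‖A (e n)‖ ^ 2)

/-- The Hilbert–Schmidt inner product `⟨A, B⟩_HS = Σₙ ⟨A eₙ, B eₙ⟩`. -/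
def hsInner (e : HilbertBasis ℕ ℂ H) (A B : H →L[ℂ] H) : ℂ :=
  ∑' n, (inner ℂ (A (e n)) (B (e n)) : ℂ)

/-- The conjugation superoperator `A ↦ U(t) A U(t)*`. -/
def conjSup (U : ℝ → H →L[ℂ] H) (t : ℝ) (A : H →L[ℂ] H) : H →L[ℂ] H :=
  U t ∘L A ∘L adjoint (U t)

/-- `U` is a strongly continuous one-parameter unitary group. -/
structure IsUnitaryGroup (U : ℝ → H →L[ℂ] H) : Prop where
  map_zero : U 0 = 1
  map_add : ∀ t s : ℝ, U (t + s) = U t ∘L U s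
  unitary_left : ∀ t : ℝ, adjoint (U t) ∘L U t = 1
  unitary_right : ∀ t : ℝ, U t ∘L adjoint (U t) = 1
  strong_continuous : ∀ ψ : H, Continuous fun t : ℝ => U t ψ

/-- A densely defined operator is self-adjoint if it coincides with its adjoint. -/
def IsSelfAdjointOp (T : H →ₗ.[ℂ] H) : Prop :=
  Dense (T.domain : Set H) ∧ T.adjoint = T

/-- `T` is the infinitesimal generator of the unitary group `U`, i.e. `U(t) = e^{-itT}`:
the domain of `T` is exactly the set of vectors where the strong derivative at `t = 0`
exists, and there the derivative equals `-i T ψ`. -/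
structure IsGenerator (U : ℝ → H →L[ℂ] H) (T : H →ₗ.[ℂ] H) : Prop where
  mem_dom : ∀ ψ : H,
    ψ ∈ T.domain ↔ ∃ L : H, Tendsto (fun t : ℝ => t⁻¹ • (U t ψ - ψ)) (𝓝[≠] 0) (𝓝 L)
  deriv : ∀ ψ : T.domain,
    Tendsto (fun t : ℝ => t⁻¹ • (U t ψ - (ψ : H))) (𝓝[≠] 0) (𝓝 ((-Complex.I) • T ψ))

/-- `L = 𝐇 A`: membership of `A` in the domain of the Liouville superoperator `𝐇`
generated by `U`, together with the value `𝐇 A = L`: the difference quotient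
`(U(t) A U(t)* - A)/t` converges in Hilbert–Schmidt norm to `-i L`. -/
def HasLiouville (e : HilbertBasis ℕ ℂ H) (U : ℝ → H →L[ℂ] H) (A L : H →L[ℂ] H) : Prop :=
  IsHS e A ∧ IsHS e L ∧
    Tendsto (fun t : ℝ => hsNorm e (t⁻¹ • (conjSup U t A - A) - (-Complex.I) • L))
      (𝓝[≠] 0) (𝓝 0)

/-- The commutator `[T, A] ψ = T(Aψ) - A(Tψ)` on the domain of `T`, for `A` mapping
`Dom T` into itself. -/
def commAt (T : H →ₗ.[ℂ] H) (A : H →L[ℂ] H)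
    (hm : ∀ x : T.domain, (A x : H) ∈ T.domain) (ψ : T.domain) : H :=
  T ⟨A ψ, hm ψ⟩ - A (T ψ)

end LiouvilleFormalization

/-!
For `ψ ∈ Dom H` the difference quotient of `t ↦ U(t) A U(t)* ψ` splits as
`U(t) A ((U(-t)ψ - ψ)/t) + (U(t) Aψ - Aψ)/t`, and the first term always converges to `A(iHψ)`.
So the quotient converges iff `(U(t) Aψ - Aψ)/t` does, i.e. iff `Aψ ∈ Dom H`, and then its limit
is `-i[H,A]ψ`. Hilbert–Schmidt convergence implies strong convergence (`‖Xψ‖ ≤ ‖X‖_HS ‖ψ‖`),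
which gives one direction. Conversely, the pointwise derivative yields the Duhamel formula
`U(t) A U(t)* - A = -i ∫₀ᵗ U(s) B U(s)* ds` on `Dom H`, hence on all of `H` by density.
Embedding the Hilbert–Schmidt operators isometrically into `ℓ²(ℕ, H)` by `X ↦ (X eₙ)ₙ`, this
becomes an identity of Bochner integrals with an integrand that is continuous by dominated
convergence, so the fundamental theorem of calculus gives the derivative `-iB` at `0`.
-/

open scoped ENNReal

namespace LiouvilleFormalization

variable {H : Type*} [NormedAddCommGroup H] [InnerProductSpace ℂ H]

section HilbertSchmidt

variable (e : HilbertBasis ℕ ℂ H)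

theorem hasSum_norm_inner_sq (x : H) : HasSum (fun n => ‖⟪e n, x⟫_ℂ‖ ^ 2) (‖x‖ ^ 2) := by
  simpa [e.repr_apply_apply, Real.rpow_two] using lp.hasSum_norm (p := 2) (by norm_num) (e.repr x)

theorem tsum_enorm_inner_sq (x : H) : ∑' n, ‖⟪e n, x⟫_ℂ‖ₑ ^ 2 = ‖x‖ₑ ^ 2 := by
  have h := hasSum_norm_inner_sq e x
  simp_rw [← ofReal_norm, ← ENNReal.ofReal_pow (norm_nonneg _),
    ← ENNReal.ofReal_tsum_of_nonneg (fun n => by positivity) h.summable, h.tsum_eq]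

theorem tsum_norm_apply_sq_eq_toReal (X : H →L[ℂ] H) :
    ∑' n, ‖X (e n)‖ ^ 2 = (∑' n, ‖X (e n)‖ₑ ^ 2).toReal := by
  rw [ENNReal.tsum_toReal_eq (fun n => by finiteness)]
  simp

theorem isHS_iff_tsum_enorm_ne_top (X : H →L[ℂ] H) :
    IsHS e X ↔ ∑' n, ‖X (e n)‖ₑ ^ 2 ≠ ∞ := by
  simp_rw [IsHS, enorm_eq_nnnorm, ← ENNReal.coe_pow, ENNReal.tsum_coe_ne_top_iff_summable,
    ← NNReal.summable_coe]
  simp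

theorem sq_hsNorm (X : H →L[ℂ] H) : hsNorm e X ^ 2 = ∑' n, ‖X (e n)‖ ^ 2 :=
  Real.sq_sqrt (tsum_nonneg fun n => by positivity)

theorem IsHS.comp_left (W : H →L[ℂ] H) {X : H →L[ℂ] H} (hX : IsHS e X) : IsHS e (W ∘L X) := by
  refine (hX.mul_left (‖W‖ ^ 2)).of_nonneg_of_le (fun n => by positivity) fun n => ?_
  rw [← mul_pow]
  gcongr
  exact W.le_opNorm _

theorem isHS_iff_memℓp (X : H →L[ℂ] H) : IsHS e X ↔ Memℓp (fun n => X (e n)) 2 := by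
  simp [IsHS, memℓp_gen_iff]

theorem IsHS.add {X Y : H →L[ℂ] H} (hX : IsHS e X) (hY : IsHS e Y) : IsHS e (X + Y) :=
  (isHS_iff_memℓp e _).2 (((isHS_iff_memℓp e X).1 hX).add ((isHS_iff_memℓp e Y).1 hY))

theorem IsHS.sub {X Y : H →L[ℂ] H} (hX : IsHS e X) (hY : IsHS e Y) : IsHS e (X - Y) :=
  (isHS_iff_memℓp e _).2 (((isHS_iff_memℓp e X).1 hX).sub ((isHS_iff_memℓp e Y).1 hY))

theorem IsHS.smul {𝕜 : Type*} [NormedField 𝕜] [NormedSpace 𝕜 H] [SMulCommClass ℂ 𝕜 H]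
    (c : 𝕜) {X : H →L[ℂ] H} (hX : IsHS e X) : IsHS e (c • X) :=
  (isHS_iff_memℓp e _).2 (((isHS_iff_memℓp e X).1 hX).const_smul c)

open scoped Classical in
def hsToLp (X : H →L[ℂ] H) : lp (fun _ : ℕ => H) 2 :=
  if h : IsHS e X then ⟨fun n => X (e n), (isHS_iff_memℓp e X).1 h⟩ else 0

theorem hsToLp_apply {X : H →L[ℂ] H} (hX : IsHS e X) (n : ℕ) : hsToLp e X n = X (e n) := by
  rw [hsToLp, dif_pos hX]

theorem norm_hsToLp {X : H →L[ℂ] H} (hX : IsHS e X) : ‖hsToLp e X‖ = hsNorm e X := by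
  rw [lp.norm_eq_tsum_rpow (by norm_num), hsNorm, Real.sqrt_eq_rpow]
  simp [hsToLp_apply e hX]

theorem hsToLp_add {X Y : H →L[ℂ] H} (hX : IsHS e X) (hY : IsHS e Y) :
    hsToLp e (X + Y) = hsToLp e X + hsToLp e Y := by
  ext n
  simp [hsToLp_apply e hX, hsToLp_apply e hY, hsToLp_apply e (hX.add e hY)]

theorem hsToLp_sub {X Y : H →L[ℂ] H} (hX : IsHS e X) (hY : IsHS e Y) :
    hsToLp e (X - Y) = hsToLp e X - hsToLp e Y := by
  ext n
  simp [hsToLp_apply e hX, hsToLp_apply e hY, hsToLp_apply e (hX.sub e hY)]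

theorem hsToLp_smul {𝕜 : Type*} [NormedField 𝕜] [NormedSpace 𝕜 H] [SMulCommClass ℂ 𝕜 H]
    (c : 𝕜) {X : H →L[ℂ] H} (hX : IsHS e X) : hsToLp e (c • X) = c • hsToLp e X := by
  ext n
  simp [hsToLp_apply e hX, hsToLp_apply e (hX.smul e c)]

variable [CompleteSpace H]

theorem tsum_enorm_adjoint_apply_sq (X : H →L[ℂ] H) :
    ∑' n, ‖adjoint X (e n)‖ₑ ^ 2 = ∑' n, ‖X (e n)‖ₑ ^ 2 := by
  simp_rw [← tsum_enorm_inner_sq e (adjoint X _), ← tsum_enorm_inner_sq e (X _)]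
  rw [ENNReal.tsum_comm]
  refine tsum_congr fun m => tsum_congr fun n => ?_
  rw [adjoint_inner_right, ← ofReal_norm, ← ofReal_norm, norm_inner_symm]

theorem isHS_adjoint_iff (X : H →L[ℂ] H) : IsHS e (adjoint X) ↔ IsHS e X := by
  rw [isHS_iff_tsum_enorm_ne_top, isHS_iff_tsum_enorm_ne_top, tsum_enorm_adjoint_apply_sq]

theorem hsNorm_adjoint (X : H →L[ℂ] H) : hsNorm e (adjoint X) = hsNorm e X := by
  rw [hsNorm, hsNorm, tsum_norm_apply_sq_eq_toReal, tsum_norm_apply_sq_eq_toReal,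
    tsum_enorm_adjoint_apply_sq]

theorem norm_apply_le_hsNorm_mul {X : H →L[ℂ] H} (hX : IsHS e X) (ψ : H) :
    ‖X ψ‖ ≤ hsNorm e X * ‖ψ‖ := by
  have hXadj : IsHS e (adjoint X) := (isHS_adjoint_iff e X).2 hX
  have hsq : ‖X ψ‖ ^ 2 ≤ (hsNorm e X * ‖ψ‖) ^ 2 := by
    rw [mul_pow, ← hsNorm_adjoint, sq_hsNorm, ← tsum_mul_right]
    refine hasSum_le (fun n => ?_) (hasSum_norm_inner_sq e (X ψ)) (hXadj.mul_right _).hasSum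
    rw [← adjoint_inner_left, ← mul_pow]
    gcongr
    exact norm_inner_le_norm _ _
  exact pow_le_pow_iff_left₀ (norm_nonneg _) (by unfold hsNorm; positivity) two_ne_zero |>.1 hsq

theorem IsHS.comp_right (W : H →L[ℂ] H) {X : H →L[ℂ] H} (hX : IsHS e X) : IsHS e (X ∘L W) := by
  rw [← isHS_adjoint_iff, adjoint_comp]
  exact ((isHS_adjoint_iff e X).2 hX).comp_left e _

theorem isHS_conjSup (U : ℝ → H →L[ℂ] H) (s : ℝ) {X : H →L[ℂ] H} (hX : IsHS e X) :
    IsHS e (conjSup U s X) :=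
  (hX.comp_right e _).comp_left e _

end HilbertSchmidt

namespace IsUnitaryGroup

variable [CompleteSpace H] {U : ℝ → H →L[ℂ] H} (hU : IsUnitaryGroup U)
include hU

theorem norm_apply (t : ℝ) (x : H) : ‖U t x‖ = ‖x‖ :=
  norm_map_of_mem_unitary ⟨hU.unitary_left t, hU.unitary_right t⟩ x

theorem adjoint_eq (t : ℝ) : adjoint (U t) = U (-t) :=
  left_inv_eq_right_inv (hU.unitary_left t) (show U t ∘L U (-t) = 1 by
    rw [← hU.map_add, add_neg_cancel, hU.map_zero])

theorem apply_comm (s t : ℝ) (x : H) : U s (U t x) = U t (U s x) := by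
  rw [← comp_apply, ← hU.map_add, add_comm, hU.map_add, comp_apply]

theorem continuous_uncurry : Continuous fun p : ℝ × H => U p.1 p.2 :=
  continuous_prod_of_continuous_lipschitzWith' _ 1
    (fun t => LipschitzWith.of_dist_le_mul fun x y => by
      simp [dist_eq_norm, ← map_sub, hU.norm_apply])
    hU.strong_continuous

theorem tendsto_apply_of_tendsto {l : Filter ℝ} (hl : l ≤ 𝓝 0) {f : ℝ → H} {x : H}
    (hf : Tendsto f l (𝓝 x)) : Tendsto (fun t => U t (f t)) l (𝓝 x) := by
  simpa [Function.comp_def, hU.map_zero] using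
    (hU.continuous_uncurry.tendsto (0, x)).comp ((tendsto_id.mono_left hl).prodMk_nhds hf)

theorem conjSup_apply (s : ℝ) (X : H →L[ℂ] H) (x : H) :
    conjSup U s X x = U s (X (U (-s) x)) := by
  simp [conjSup, hU.adjoint_eq]

theorem conjSup_zero (X : H →L[ℂ] H) : conjSup U 0 X = X := by
  ext x
  simp [hU.conjSup_apply, hU.map_zero]

theorem conjSup_add_apply (s u : ℝ) (X : H →L[ℂ] H) (x : H) :
    conjSup U (s + u) X x = U s (conjSup U u X (U (-s) x)) := by
  simp [hU.conjSup_apply, hU.map_add, neg_add_rev]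

theorem continuous_conjSup_uncurry (X : H →L[ℂ] H) :
    Continuous fun p : ℝ × H => conjSup U p.1 X p.2 := by
  simp_rw [hU.conjSup_apply]
  exact hU.continuous_uncurry.comp (continuous_fst.prodMk (X.continuous.comp
    (hU.continuous_uncurry.comp (continuous_fst.neg.prodMk continuous_snd))))

theorem continuous_conjSup_apply (X : H →L[ℂ] H) (x : H) :
    Continuous fun s => conjSup U s X x :=
  (hU.continuous_conjSup_uncurry X).comp (continuous_id.prodMk continuous_const)

theorem slope_conjSup_apply (X : H →L[ℂ] H) (t : ℝ) (x : H) :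
    t⁻¹ • (conjSup U t X x - X x) = U t (X (t⁻¹ • (U (-t) x - x))) + t⁻¹ • (U t (X x) - X x) := by
  rw [hU.conjSup_apply, map_smul_of_tower, map_smul_of_tower, map_sub, map_sub, ← smul_add,
    sub_add_sub_cancel]

theorem hsNorm_comp_left (e : HilbertBasis ℕ ℂ H) (t : ℝ) (X : H →L[ℂ] H) :
    hsNorm e (U t ∘L X) = hsNorm e X := by
  simp [hsNorm, hU.norm_apply]

theorem tendsto_hsNorm_sub_comp (e : HilbertBasis ℕ ℂ H) {C : H →L[ℂ] H} (hC : IsHS e C)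
    (s₀ : ℝ) : Tendsto (fun s => hsNorm e ((U s - U s₀) ∘L C)) (𝓝 s₀) (𝓝 0) := by
  have h : Tendsto (fun s => ∑' n, ‖((U s - U s₀) ∘L C) (e n)‖ ^ 2) (𝓝 s₀)
      (𝓝 (∑' _ : ℕ, 0)) := by
    refine tendsto_tsum_of_dominated_convergence (bound := fun n => 4 * ‖C (e n)‖ ^ 2)
      (hC.mul_left 4) (fun n => ?_) (Eventually.of_forall fun s n => ?_)
    · simpa using
        (((hU.strong_continuous (C (e n))).tendsto s₀).sub_const (U s₀ (C (e n)))).norm.pow 2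
    · have h2 : ‖U s (C (e n)) - U s₀ (C (e n))‖ ≤ 2 * ‖C (e n)‖ :=
        (norm_sub_le _ _).trans_eq (by rw [hU.norm_apply, hU.norm_apply, two_mul])
      rw [norm_pow, norm_norm]
      exact (pow_le_pow_left₀ (norm_nonneg _) h2 2).trans_eq (by ring)
  rw [tsum_zero] at h
  exact Real.sqrt_zero ▸ (Real.continuous_sqrt.tendsto 0).comp h

theorem continuous_hsToLp_conjSup (e : HilbertBasis ℕ ℂ H) {B : H →L[ℂ] H} (hB : IsHS e B) :
    Continuous fun s => hsToLp e (conjSup U s B) := by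
  refine continuous_iff_continuousAt.2 fun s₀ => tendsto_iff_norm_sub_tendsto_zero.2 ?_
  refine squeeze_zero (fun s => norm_nonneg _) (fun s => ?_) (by
    simpa only [add_zero] using (hU.tendsto_hsNorm_sub_comp e ((isHS_adjoint_iff e B).2 hB) s₀).add
      (hU.tendsto_hsNorm_sub_comp e (hB.comp_right e (adjoint (U s₀))) s₀))
  have hdec : conjSup U s B - conjSup U s₀ B
      = U s ∘L (B ∘L (adjoint (U s) - adjoint (U s₀))) + (U s - U s₀) ∘L (B ∘L adjoint (U s₀)) := by
    ext x
    simp only [conjSup, comp_apply, sub_apply, add_apply, map_sub]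
    abel
  have hP : IsHS e (B ∘L (adjoint (U s) - adjoint (U s₀))) := hB.comp_right e _
  have hQ : IsHS e (B ∘L adjoint (U s₀)) := hB.comp_right e _
  rw [← hsToLp_sub e (isHS_conjSup e U s hB) (isHS_conjSup e U s₀ hB), hdec,
    hsToLp_add e (hP.comp_left e _) (hQ.comp_left e _)]
  refine (norm_add_le _ _).trans_eq ?_
  rw [norm_hsToLp e (hP.comp_left e _), norm_hsToLp e (hQ.comp_left e _), hU.hsNorm_comp_left,
    ← hsNorm_adjoint e (B ∘L _), adjoint_comp, map_sub, adjoint_adjoint, adjoint_adjoint]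

end IsUnitaryGroup

theorem IsGenerator.tendsto_slope_neg {U : ℝ → H →L[ℂ] H} {T : H →ₗ.[ℂ] H}
    (hgen : IsGenerator U T) (ψ : T.domain) :
    Tendsto (fun t : ℝ => t⁻¹ • (U (-t) ψ - (ψ : H))) (𝓝[≠] 0) (𝓝 (Complex.I • T ψ)) := by
  have hneg : Tendsto (fun t : ℝ => -t) (𝓝[≠] 0) (𝓝[≠] 0) :=
    tendsto_nhdsWithin_iff.2 ⟨(continuous_neg.tendsto' 0 0 neg_zero).mono_left nhdsWithin_le_nhds,
      eventually_nhdsWithin_of_forall fun t ht => neg_ne_zero.2 ht⟩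
  simpa [Function.comp_def] using ((hgen.deriv ψ).comp hneg).neg

variable [CompleteSpace H]

namespace IsGenerator

variable {U : ℝ → H →L[ℂ] H} {T : H →ₗ.[ℂ] H} (hU : IsUnitaryGroup U) (hgen : IsGenerator U T)

include hU hgen

theorem apply_mem_domain (s : ℝ) (ψ : T.domain) : U s (ψ : H) ∈ T.domain := by
  refine (hgen.mem_dom _).2 ⟨U s ((-Complex.I) • T ψ), ?_⟩
  refine (((U s).continuous.tendsto _).comp (hgen.deriv ψ)).congr fun t => ?_
  simp [map_sub, hU.apply_comm s t]

theorem tendsto_slope_conjSup_apply_iff (A : H →L[ℂ] H) (ψ : T.domain) (v : H) :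
    Tendsto (fun t : ℝ => t⁻¹ • (conjSup U t A ψ - A ψ)) (𝓝[≠] 0) (𝓝 v) ↔
      Tendsto (fun t : ℝ => t⁻¹ • (U t (A ψ) - A ψ)) (𝓝[≠] 0)
        (𝓝 (v - A (Complex.I • T ψ))) := by
  have hfirst : Tendsto (fun t : ℝ => U t (A (t⁻¹ • (U (-t) ψ - (ψ : H))))) (𝓝[≠] 0)
      (𝓝 (A (Complex.I • T ψ))) :=
    hU.tendsto_apply_of_tendsto nhdsWithin_le_nhds
      ((A.continuous.tendsto _).comp (hgen.tendsto_slope_neg ψ))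
  simp_rw [hU.slope_conjSup_apply]
  exact ⟨fun h => by simpa using h.sub hfirst, fun h => by simpa using hfirst.add h⟩

theorem tendsto_slope_conjSup_apply_of_commAt {A : H →L[ℂ] H}
    (hm : ∀ x : T.domain, (A x : H) ∈ T.domain) (ψ : T.domain) :
    Tendsto (fun t : ℝ => t⁻¹ • (conjSup U t A ψ - A ψ)) (𝓝[≠] 0)
      (𝓝 ((-Complex.I) • commAt T A hm ψ)) := by
  rw [hgen.tendsto_slope_conjSup_apply_iff hU]
  convert hgen.deriv ⟨A ψ, hm ψ⟩ using 2
  rw [commAt, map_smul]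
  module

theorem hasDerivAt_conjSup_apply {A B : H →L[ℂ] H} (hm : ∀ x : T.domain, (A x : H) ∈ T.domain)
    (hB : ∀ ψ : T.domain, B ψ = commAt T A hm ψ) (ψ : T.domain) (s : ℝ) :
    HasDerivAt (fun r => conjSup U r A ψ) ((-Complex.I) • conjSup U s B ψ) s := by
  rw [hasDerivAt_iff_tendsto_slope_zero]
  set φ : T.domain := ⟨U (-s) ψ, hgen.apply_mem_domain hU (-s) ψ⟩
  have h := ((U s).continuous.tendsto _).comp
    (hgen.tendsto_slope_conjSup_apply_of_commAt hU hm φ)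
  rw [← hB φ, map_smul, ← hU.conjSup_apply] at h
  refine h.congr fun u => ?_
  simp [φ, map_sub, hU.conjSup_add_apply, hU.conjSup_apply s A]

end IsGenerator

namespace HasLiouville

variable {e : HilbertBasis ℕ ℂ H} {U : ℝ → H →L[ℂ] H} {T : H →ₗ.[ℂ] H} {A L : H →L[ℂ] H}

theorem tendsto_slope_conjSup_apply (hL : HasLiouville e U A L) (x : H) :
    Tendsto (fun t : ℝ => t⁻¹ • (conjSup U t A x - A x)) (𝓝[≠] 0)
      (𝓝 ((-Complex.I) • L x)) := by
  obtain ⟨hA, hLHS, hlim⟩ := hL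
  refine tendsto_iff_norm_sub_tendsto_zero.2 (squeeze_zero (fun t => norm_nonneg _)
    (fun t => ?_) (by simpa using hlim.mul_const ‖x‖))
  have hX : IsHS e (t⁻¹ • (conjSup U t A - A) - (-Complex.I) • L) :=
    (((isHS_conjSup e U t hA).sub e hA).smul e _).sub e (hLHS.smul e _)
  simpa using norm_apply_le_hsNorm_mul e hX x

variable (hU : IsUnitaryGroup U) (hgen : IsGenerator U T)
include hU hgen

theorem tendsto_slope_apply_apply (hL : HasLiouville e U A L) (ψ : T.domain) :
    Tendsto (fun t : ℝ => t⁻¹ • (U t (A ψ) - A ψ)) (𝓝[≠] 0)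
      (𝓝 ((-Complex.I) • L ψ - A (Complex.I • T ψ))) :=
  (hgen.tendsto_slope_conjSup_apply_iff hU A ψ _).1 (hL.tendsto_slope_conjSup_apply ψ)

theorem apply_mem_domain (hL : HasLiouville e U A L) (ψ : T.domain) : (A ψ : H) ∈ T.domain :=
  (hgen.mem_dom _).2 ⟨_, hL.tendsto_slope_apply_apply hU hgen ψ⟩

theorem commAt_eq (hL : HasLiouville e U A L) (hm : ∀ x : T.domain, (A x : H) ∈ T.domain)
    (ψ : T.domain) : commAt T A hm ψ = L ψ := by
  have h := tendsto_nhds_unique (hgen.deriv ⟨A ψ, hm ψ⟩) (hL.tendsto_slope_apply_apply hU hgen ψ)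
  apply smul_right_injective H (neg_ne_zero.2 Complex.I_ne_zero)
  simp only [commAt, smul_sub, h, map_smul]
  module

end HasLiouville

section Duhamel

variable {U : ℝ → H →L[ℂ] H} {T : H →ₗ.[ℂ] H} (hU : IsUnitaryGroup U) (hgen : IsGenerator U T)
  {A B : H →L[ℂ] H} (hm : ∀ x : T.domain, (A x : H) ∈ T.domain)
  (hB : ∀ ψ : T.domain, B ψ = commAt T A hm ψ)
include hU hgen hB

theorem conjSup_sub_eq_integral (hdense : Dense (T.domain : Set H)) (t : ℝ) (x : H) :
    conjSup U t A x - A x = ∫ s in 0..t, (-Complex.I) • conjSup U s B x := by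
  have hint : Continuous fun x : H => ∫ s in 0..t, (-Complex.I) • conjSup U s B x :=
    intervalIntegral.continuous_parametric_intervalIntegral_of_continuous'
      (((hU.continuous_conjSup_uncurry B).comp continuous_swap).fun_const_smul _) 0 t
  refine congrFun (Continuous.ext_on hdense ((conjSup U t A).continuous.sub A.continuous) hint
    fun ψ hψ => ?_) x
  rw [Pi.sub_apply, intervalIntegral.integral_eq_sub_of_hasDerivAt
    (fun s _ => hgen.hasDerivAt_conjSup_apply hU hm hB ⟨ψ, hψ⟩ s)
    (((hU.continuous_conjSup_apply B ψ).fun_const_smul _).intervalIntegrable 0 t), hU.conjSup_zero]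

variable (e : HilbertBasis ℕ ℂ H) (hdense : Dense (T.domain : Set H)) (hA : IsHS e A)
  (hBHS : IsHS e B)
include hdense hA hBHS

theorem hsToLp_conjSup_sub_eq_integral (t : ℝ) :
    hsToLp e (conjSup U t A) - hsToLp e A
      = ∫ s in 0..t, (-Complex.I) • hsToLp e (conjSup U s B) := by
  ext n
  have h := (lp.evalCLM ℂ (fun _ : ℕ => H) 2 n).intervalIntegral_comp_comm
    (((hU.continuous_hsToLp_conjSup e hBHS).fun_const_smul (-Complex.I)).intervalIntegrable
      (μ := MeasureTheory.volume) 0 t)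
  simp only [lp.evalCLM, LinearMap.mkContinuous_apply, lp.evalₗ_apply, lp.coeFn_smul,
    Pi.smul_apply, hsToLp_apply e (isHS_conjSup e U _ hBHS)] at h
  rw [← h, lp.coeFn_sub, Pi.sub_apply, hsToLp_apply e (isHS_conjSup e U t hA), hsToLp_apply e hA,
    conjSup_sub_eq_integral hU hgen hm hB hdense]

theorem hasLiouville_of_commAt : HasLiouville e U A B := by
  refine ⟨hA, hBHS, ?_⟩
  have hderiv : HasDerivAt (fun t => hsToLp e (conjSup U t A)) ((-Complex.I) • hsToLp e B) 0 := by
    have hcont : Continuous fun s => (-Complex.I) • hsToLp e (conjSup U s B) :=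
      (hU.continuous_hsToLp_conjSup e hBHS).fun_const_smul _
    have h := ((hcont.integral_hasStrictDerivAt 0 0).hasDerivAt).const_add (hsToLp e A)
    rw [hU.conjSup_zero] at h
    refine h.congr_of_eventuallyEq (Eventually.of_forall fun t => ?_)
    dsimp only
    rw [← hsToLp_conjSup_sub_eq_integral hU hgen hm hB e hdense hA hBHS, add_sub_cancel]
  rw [hasDerivAt_iff_tendsto_slope_zero] at hderiv
  refine (tendsto_iff_norm_sub_tendsto_zero.1 hderiv).congr fun t => ?_
  have hdiff : IsHS e (conjSup U t A - A) := (isHS_conjSup e U t hA).sub e hA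
  have hquot : IsHS e (t⁻¹ • (conjSup U t A - A)) := hdiff.smul e _
  rw [zero_add, hU.conjSup_zero, ← hsToLp_sub e (isHS_conjSup e U t hA) hA,
    ← hsToLp_smul e _ hdiff, ← hsToLp_smul e _ hBHS, ← hsToLp_sub e hquot (hBHS.smul e _),
    norm_hsToLp e (hquot.sub e (hBHS.smul e _))]

end Duhamel

/-- Courbage's characterization of the Liouvillian: a Hilbert–Schmidt `A`
belongs to `Dom 𝐇` iff `A · Dom H ⊆ Dom H`, the commutator `[H,A]` on `Dom H` is bounded,
and its closure (the continuous `B` agreeing with `[H,A]` on `Dom H`) is Hilbert–Schmidt;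
in that case `𝐇 A = overline[H,A]`. -/
theorem statement4 (e : HilbertBasis ℕ ℂ H) (T : H →ₗ.[ℂ] H) (hT : IsSelfAdjointOp T)
    (U : ℝ → H →L[ℂ] H) (hU : IsUnitaryGroup U) (hgen : IsGenerator U T)
    (A : H →L[ℂ] H) (hA : IsHS e A) :
    ((∃ L : H →L[ℂ] H, HasLiouville e U A L) ↔
      ∃ (hm : ∀ x : T.domain, (A x : H) ∈ T.domain) (B : H →L[ℂ] H),
        IsHS e B ∧ ∀ ψ : T.domain, B ψ = commAt T A hm ψ) ∧
    (∀ (L : H →L[ℂ] H) (hm : ∀ x : T.domain, (A x : H) ∈ T.domain) (B : H →L[ℂ] H),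
      HasLiouville e U A L → (∀ ψ : T.domain, B ψ = commAt T A hm ψ) → L = B) := by
  refine ⟨⟨fun ⟨L, hL⟩ => ?_, fun ⟨hm, B, hBHS, hB⟩ => ?_⟩, fun L hm B hL hB => ?_⟩
  · have hm := hL.apply_mem_domain hU hgen
    exact ⟨hm, L, hL.2.1, fun ψ => (hL.commAt_eq hU hgen hm ψ).symm⟩
  · exact ⟨B, hasLiouville_of_commAt hU hgen hm hB e hT.1 hA hBHS⟩
  · refine DFunLike.coe_injective (Continuous.ext_on hT.1 L.continuous B.continuous ?_)
    intro ψ hψ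
    rw [hB ⟨ψ, hψ⟩, hL.commAt_eq hU hgen hm ⟨ψ, hψ⟩]

end LiouvilleFormalization
end
end

section
/- Let H be a densely defined self-adjoint operator on ℋ and A a Hilbert–Schmidt operator on ℋ, and let HA be the operator with domain {φ ∈ ℋ : Aφ ∈ Dom H}. Then the following are equivalent: (i) HA is densely defined and bounded, and its closure overline(HA) is Hilbert–Schmidt; (ii) A maps ℋ into Dom H and the everywhere-defined operator HA is Hilbert–Schmidt. Moreover, in this case overline(HA) = HA. -/
/-! A self-adjoint operator is closed, and the continuous map `φ ↦ (A φ, B φ)` sends the dense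
set `{φ | A φ ∈ Dom T}` into the graph of `T`; hence it sends all of `ℋ` into that graph. -/

open Filter Topology ContinuousLinearMap
open scoped InnerProductSpace

theorem LinearPMap.IsClosed.exists_apply_eq_of_dense {R G E F : Type*} [CommRing R]
    [TopologicalSpace G] [AddCommGroup E] [Module R E] [TopologicalSpace E]
    [AddCommGroup F] [Module R F] [TopologicalSpace F] {T : E →ₗ.[R] F} (hT : T.IsClosed)
    {A : G → E} {B : G → F} (hA : Continuous A) (hB : Continuous B)
    (hdense : Dense {φ | A φ ∈ T.domain}) (hBA : ∀ φ (h : A φ ∈ T.domain), B φ = T ⟨A φ, h⟩)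
    (φ : G) : ∃ h : A φ ∈ T.domain, B φ = T ⟨A φ, h⟩ := by
  have hgraph : _root_.IsClosed {φ | (A φ, B φ) ∈ T.graph} := hT.preimage (hA.prodMk hB)
  have hsub : {φ | A φ ∈ T.domain} ⊆ {φ | (A φ, B φ) ∈ T.graph} := fun φ h => by
    rw [Set.mem_ofPred_eq, hBA φ h]
    exact T.mem_graph ⟨A φ, h⟩
  obtain ⟨⟨y, hy⟩, hyA : y = A φ, hTy⟩ :=
    T.mem_graph_iff.mp (hgraph.closure_subset_iff.mpr hsub (hdense.closure_eq ▸ Set.mem_univ φ))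
  subst hyA
  exact ⟨hy, hTy.symm⟩

noncomputable section

namespace LiouvilleFormalization

variable {H : Type*} [NormedAddCommGroup H] [InnerProductSpace ℂ H] [CompleteSpace H]

theorem statement10_general (e : HilbertBasis ℕ ℂ H) (T : H →ₗ.[ℂ] H) (hT : IsSelfAdjointOp T)
    (A : H →L[ℂ] H) :
    (Dense {φ : H | A φ ∈ T.domain} ∧
      ∃ B : H →L[ℂ] H, IsHS e B ∧ ∀ (φ : H) (h : A φ ∈ T.domain), B φ = T ⟨A φ, h⟩) ↔
    (∃ (h : ∀ φ : H, A φ ∈ T.domain) (B : H →L[ℂ] H),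
      IsHS e B ∧ ∀ φ : H, B φ = T ⟨A φ, h φ⟩) := by
  constructor
  · rintro ⟨hdense, B, hB, hBA⟩
    choose hdom hBT using (IsSelfAdjoint.isClosed hT.2).exists_apply_eq_of_dense
      A.continuous B.continuous hdense hBA
    exact ⟨hdom, B, hB, hBT⟩
  · rintro ⟨hdom, B, hB, hBA⟩
    refine ⟨?_, B, hB, fun φ _ => hBA φ⟩
    simpa only [hdom, Set.ofPred_true] using dense_univ

/-- for `H` densely defined self-adjoint and `A` Hilbert–Schmidt, the
following are equivalent: (i) `HA` (domain `{φ : Aφ ∈ Dom H}`) is densely defined and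
bounded and its closure (a continuous `B` agreeing with `HA` on its domain) is
Hilbert–Schmidt; (ii) `A` maps `ℋ` into `Dom H` and the everywhere-defined `HA` is
Hilbert–Schmidt.  In this case `overline(HA) = HA` (the same `B` works in both). -/
theorem statement10 (e : HilbertBasis ℕ ℂ H) (T : H →ₗ.[ℂ] H) (hT : IsSelfAdjointOp T)
    (A : H →L[ℂ] H) (hA : IsHS e A) :
    (Dense {φ : H | A φ ∈ T.domain} ∧
      ∃ B : H →L[ℂ] H, IsHS e B ∧ ∀ (φ : H) (h : A φ ∈ T.domain), B φ = T ⟨A φ, h⟩) ↔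
    (∃ (h : ∀ φ : H, A φ ∈ T.domain) (B : H →L[ℂ] H),
      IsHS e B ∧ ∀ φ : H, B φ = T ⟨A φ, h φ⟩) :=
  statement10_general e T hT A

end LiouvilleFormalization
end
end

section
/- Let H be a densely defined self-adjoint operator on ℋ that is positive and bijective from Dom H onto ℋ, whose inverse H⁻¹ is a Hilbert–Schmidt operator. Then H⁻¹ ∈ Dom 𝐇 with 𝐇(H⁻¹) = 0, yet H⁻¹ does not belong to 𝒟 = {A ∈ 𝓛(ℋ) : A ℋ ⊆ Dom H and HA, HA* are Hilbert–Schmidt}, because H·H⁻¹ is the identity operator, which is not Hilbert–Schmidt on an infinite-dimensional space. In particular, 𝒟 is a proper subspace of Dom 𝐇. -/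
open Filter Topology ContinuousLinearMap
open scoped InnerProductSpace

noncomputable section

namespace LiouvilleFormalization

variable {H : Type*} [NormedAddCommGroup H] [InnerProductSpace ℂ H] [CompleteSpace H]

/-- Membership in `𝒟 = {A ∈ 𝓛(ℋ) : A ℋ ⊆ Dom H and HA, HA* are Hilbert–Schmidt}`. -/
def MemD (e : HilbertBasis ℕ ℂ H) (T : H →ₗ.[ℂ] H) (A : H →L[ℂ] H) : Prop :=
  IsHS e A ∧
  ∃ (h : ∀ φ : H, A φ ∈ T.domain) (h' : ∀ φ : H, adjoint A φ ∈ T.domain)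
    (B B' : H →L[ℂ] H), IsHS e B ∧ IsHS e B' ∧
    (∀ φ : H, B φ = T ⟨A φ, h φ⟩) ∧ (∀ φ : H, B' φ = T ⟨adjoint A φ, h' φ⟩)

end LiouvilleFormalization

namespace LiouvilleFormalization

/-! The unitary group `U(t) = e^{-itH}` commutes with `H`, hence with its
inverse, so `U(t) H⁻¹ U(t)* = H⁻¹` for every `t` and the difference quotient defining
`𝐇(H⁻¹)` vanishes identically. On the other hand `H·H⁻¹ = 1`, and the identity has
Hilbert–Schmidt norm `Σₙ ‖eₙ‖² = ∞`. -/

variable {H : Type*} [NormedAddCommGroup H] [InnerProductSpace ℂ H]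

theorem isHS_zero (e : HilbertBasis ℕ ℂ H) : IsHS e 0 := by
  simp [IsHS, summable_zero]

theorem not_isHS_one (e : HilbertBasis ℕ ℂ H) : ¬ IsHS e (1 : H →L[ℂ] H) := by
  intro hs
  have hconst : Summable fun _ : ℕ => (1 : ℝ) :=
    hs.congr fun n => by simp [e.orthonormal.1 n]
  exact one_ne_zero ((summable_const_iff (1 : ℝ)).mp hconst)

theorem IsGenerator.domain_invariant_of_commute {U : ℝ → H →L[ℂ] H} {T : H →ₗ.[ℂ] H}
    (hgen : IsGenerator U T) {V : H →L[ℂ] H} (hV : ∀ t, U t ∘L V = V ∘L U t)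
    (ψ : T.domain) : ∃ h : V (ψ : H) ∈ T.domain, T ⟨V ψ, h⟩ = V (T ψ) := by
  have hVψ : Tendsto (fun t : ℝ => t⁻¹ • (U t (V ψ) - V ψ)) (𝓝[≠] 0)
      (𝓝 (V ((-Complex.I) • T ψ))) := by
    refine (((V.continuous.tendsto _).comp (hgen.deriv ψ))).congr fun t => ?_
    have hcomm : U t (V ψ) = V (U t ψ) := congrArg (fun A : H →L[ℂ] H => A ψ) (hV t)
    simp [hcomm]
  have hmem : V (ψ : H) ∈ T.domain := (hgen.mem_dom _).mpr ⟨_, hVψ⟩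
  have hderiv := tendsto_nhds_unique (hgen.deriv ⟨V ψ, hmem⟩) hVψ
  rw [map_smul] at hderiv
  exact ⟨hmem, smul_right_injective H (neg_ne_zero.mpr Complex.I_ne_zero) hderiv⟩

variable [CompleteSpace H]

theorem IsUnitaryGroup.comp_comm {U : ℝ → H →L[ℂ] H} (hU : IsUnitaryGroup U) (t s : ℝ) :
    U t ∘L U s = U s ∘L U t := by
  rw [← hU.map_add, ← hU.map_add, add_comm]

theorem IsGenerator.inverse_commute {U : ℝ → H →L[ℂ] H} {T : H →ₗ.[ℂ] H}
    (hgen : IsGenerator U T) (hU : IsUnitaryGroup U) {Hinv : H →L[ℂ] H}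
    (hmem : ∀ φ : H, Hinv φ ∈ T.domain) (hright : ∀ φ : H, T ⟨Hinv φ, hmem φ⟩ = φ)
    (hleft : ∀ ψ : T.domain, Hinv (T ψ) = ψ) (s : ℝ) (φ : H) :
    Hinv (U s φ) = U s (Hinv φ) := by
  obtain ⟨hUs, hTUs⟩ := hgen.domain_invariant_of_commute (V := U s)
    (fun t => hU.comp_comm t s) ⟨Hinv φ, hmem φ⟩
  rw [hright] at hTUs
  simpa [hTUs] using hleft ⟨U s (Hinv φ), hUs⟩

theorem conjSup_eq_self {U : ℝ → H →L[ℂ] H} (hU : IsUnitaryGroup U) {A : H →L[ℂ] H}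
    (hA : ∀ t φ, A (U t φ) = U t (A φ)) (t : ℝ) : conjSup U t A = A := by
  ext φ
  have hUU : U t (adjoint (U t) φ) = φ :=
    congrArg (fun B : H →L[ℂ] H => B φ) (hU.unitary_right t)
  simp only [conjSup, comp_apply, ← hA, hUU]

theorem hasLiouville_zero_of_conjSup_eq_self (e : HilbertBasis ℕ ℂ H)
    {U : ℝ → H →L[ℂ] H} {A : H →L[ℂ] H} (hA : IsHS e A) (hfix : ∀ t, conjSup U t A = A) :
    HasLiouville e U A 0 := by
  refine ⟨hA, isHS_zero e, tendsto_const_nhds.congr fun t => ?_⟩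
  simp [hfix t, hsNorm]

theorem not_memD_of_rightInverse (e : HilbertBasis ℕ ℂ H) {T : H →ₗ.[ℂ] H}
    {A : H →L[ℂ] H} (hmem : ∀ φ : H, A φ ∈ T.domain)
    (hright : ∀ φ : H, T ⟨A φ, hmem φ⟩ = φ) : ¬ MemD e T A := by
  rintro ⟨-, h, -, B, -, hBHS, -, hB, -⟩
  exact not_isHS_one e (hBHS.congr fun n => by simp [hB, hright])

theorem statement18_general (e : HilbertBasis ℕ ℂ H) (T : H →ₗ.[ℂ] H)
    (U : ℝ → H →L[ℂ] H) (hU : IsUnitaryGroup U) (hgen : IsGenerator U T)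
    (Hinv : H →L[ℂ] H) (hHinvHS : IsHS e Hinv)
    (hmem : ∀ φ : H, Hinv φ ∈ T.domain)
    (hright : ∀ φ : H, T ⟨Hinv φ, hmem φ⟩ = φ)
    (hleft : ∀ ψ : T.domain, Hinv (T ψ) = ψ) :
    HasLiouville e U Hinv 0 ∧ ¬ IsHS e (1 : H →L[ℂ] H) ∧ ¬ MemD e T Hinv :=
  ⟨hasLiouville_zero_of_conjSup_eq_self e hHinvHS
      (conjSup_eq_self hU (hgen.inverse_commute hU hmem hright hleft)),
    not_isHS_one e, not_memD_of_rightInverse e hmem hright⟩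

/-- if `H` is densely defined, self-adjoint, positive, and a bijection from
`Dom H` onto `ℋ` whose inverse `H⁻¹` is Hilbert–Schmidt, then `H⁻¹ ∈ Dom 𝐇` with
`𝐇(H⁻¹) = 0`, yet `H⁻¹ ∉ 𝒟` (indeed `H·H⁻¹ = 1`, which is not Hilbert–Schmidt in infinite
dimension); in particular `𝒟` is a proper subspace of `Dom 𝐇`. -/
theorem statement18 (e : HilbertBasis ℕ ℂ H) (T : H →ₗ.[ℂ] H) (hT : IsSelfAdjointOp T)
    (U : ℝ → H →L[ℂ] H) (hU : IsUnitaryGroup U) (hgen : IsGenerator U T)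
    (hpos : ∀ ψ : T.domain, 0 ≤ (inner ℂ ((ψ : H)) (T ψ) : ℂ).re)
    (Hinv : H →L[ℂ] H) (hHinvHS : IsHS e Hinv)
    (hmem : ∀ φ : H, Hinv φ ∈ T.domain)
    (hright : ∀ φ : H, T ⟨Hinv φ, hmem φ⟩ = φ)
    (hleft : ∀ ψ : T.domain, Hinv (T ψ) = ψ) :
    HasLiouville e U Hinv 0 ∧ ¬ IsHS e (1 : H →L[ℂ] H) ∧ ¬ MemD e T Hinv :=
  statement18_general e T U hU hgen Hinv hHinvHS hmem hright hleft

end LiouvilleFormalization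
end
end
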